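/- arXiv:1310.3351 — 2 statements merged into one kernel-verified Lean document; each statement's English description precedes it below -/
import Mathlib

section
/- Let E be an elliptic curve over a finite field k, P ∈ E(k) fixed, and X, Y finite subsets of E(k) not containing P and meeting in exactly one point. Then L_0((X ∪ Y)) = L_0((X)) ⊕ L_0((Y)), where L_0(D) = { f ∈ L(D) : f(P) = 0 }. -/
/-!
A function in `L₀((X)) ∩ L₀((Y))` has divisor at least `-((X) ⊓ (Y)) = -(Q)`, so it lies in
`L((Q))`, which Riemann–Roch makes one-dimensional, i.e. the constants; vanishing at `P` it is `0`.
Riemann–Roch also gives `dim L₀((Z)) = |Z| - 1` whenever `Q ∈ Z`, and `|X| + |Y| = |X ∪ Y| + 1`,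
so the two summands fill `L₀((X ∪ Y))`.
-/

open scoped Classical

/-- The effective divisor `(Z) = Σ_{z ∈ Z} z` attached to a finite set `Z` of points. -/
noncomputable def setDiv {pt : Type} (Z : Finset pt) : pt →₀ ℤ :=
  ∑ z ∈ Z, Finsupp.single z 1

open Module Submodule

section setDiv

variable {pt : Type}

lemma setDiv_apply (Z : Finset pt) (w : pt) : setDiv Z w = if w ∈ Z then 1 else 0 := by
  simp [setDiv, Finsupp.finsetSum_apply, Finsupp.single_apply]

lemma setDiv_nonneg (Z : Finset pt) : 0 ≤ setDiv Z := fun w => by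
  rw [setDiv_apply]; split_ifs <;> simp

lemma setDiv_mono {Z W : Finset pt} (h : Z ⊆ W) : setDiv Z ≤ setDiv W := fun w => by
  simp only [setDiv_apply]
  split_ifs with hZ hW <;> first | exact absurd (h hZ) hW | simp

lemma setDiv_inter (X Y : Finset pt) : setDiv (X ∩ Y) = setDiv X ⊓ setDiv Y := by
  ext w
  simp only [Finsupp.inf_apply, setDiv_apply, Finset.mem_inter]
  split_ifs <;> simp_all

lemma setDiv_ne_zero {Z : Finset pt} (hZ : Z.Nonempty) : setDiv Z ≠ 0 := by
  obtain ⟨q, hq⟩ := hZ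
  intro h
  simpa [setDiv_apply, hq] using DFunLike.congr_fun h q

lemma sum_setDiv (Z : Finset pt) : ((setDiv Z).sum fun _ n => n) = Z.card := by
  rw [setDiv, ← Finsupp.sum_finsetSum_index (fun _ => rfl) (fun _ _ _ => rfl)]
  simp

end setDiv

section LinearAlgebra

variable {k V : Type*} [Field k] [AddCommGroup V] [Module k V] [FiniteDimensional k V]

lemma finrank_ker_inf_add_one {f : V →ₗ[k] k} {W : Submodule k V} {w : V} (hw : w ∈ W)
    (hfw : f w ≠ 0) : finrank k (LinearMap.ker f ⊓ W : Submodule k V) + 1 = finrank k W := by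
  set g : Dual k W := f ∘ₗ W.subtype
  have hg : g ≠ 0 := fun h => hfw (LinearMap.congr_fun h ⟨w, hw⟩)
  rw [← g.finrank_ker_add_one_of_ne_zero hg, ← finrank_map_subtype_eq, LinearMap.ker_comp,
    map_comap_subtype, inf_comm]

lemma sup_eq_of_inf_eq_bot_of_finrank_add_eq {A B C : Submodule k V} (hA : A ≤ C) (hB : B ≤ C)
    (hAB : A ⊓ B = ⊥) (hdim : finrank k A + finrank k B = finrank k C) : A ⊔ B = C := by
  refine eq_of_le_of_finrank_le (sup_le hA hB) ?_
  have := finrank_sup_add_finrank_inf_eq A B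
  rw [hAB, finrank_bot] at this
  omega

end LinearAlgebra

section RiemannRochSpace

variable {k K pt : Type} [Field k] [Field K] [Algebra k K] {L : (pt →₀ ℤ) → Submodule k K}

lemma inf_le_of_mem_iff_exists_unit (dv : Kˣ → (pt →₀ ℤ))
    (hL : ∀ (D : pt →₀ ℤ) (f : K), f ∈ L D ↔ f = 0 ∨ ∃ u : Kˣ, (u : K) = f ∧ 0 ≤ dv u + D)
    (D₁ D₂ : pt →₀ ℤ) : L D₁ ⊓ L D₂ ≤ L (D₁ ⊓ D₂) := by
  rintro f ⟨h₁, h₂⟩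
  rcases (hL _ _).mp h₁ with rfl | ⟨u, rfl, hu₁⟩
  · exact zero_mem _
  rcases (hL _ _).mp h₂ with h | ⟨v, hv, hv₂⟩
  · exact absurd h u.ne_zero
  obtain rfl : v = u := Units.ext hv
  exact (hL _ _).mpr <| .inr ⟨v, rfl, fun w => by
    simpa using le_min (hu₁ w) (hv₂ w)⟩

lemma algebraMap_mem_of_nonneg (hconst : ∀ c : k, algebraMap k K c ∈ L 0)
    (hmono : ∀ D D' : pt →₀ ℤ, D ≤ D' → L D ≤ L D') {D : pt →₀ ℤ} (hD : 0 ≤ D) (c : k) :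
    algebraMap k K c ∈ L D :=
  hmono 0 D hD (hconst c)

lemma eq_range_algebraMap_of_finrank_eq_one (hconst : ∀ c : k, algebraMap k K c ∈ L 0)
    (hmono : ∀ D D' : pt →₀ ℤ, D ≤ D' → L D ≤ L D') {D : pt →₀ ℤ} (hD : 0 ≤ D)
    (h1 : finrank k (L D) = 1) : L D = LinearMap.range (Algebra.linearMap k K) := by
  have : FiniteDimensional k (L D) := .of_finrank_pos (by omega)
  refine (eq_of_le_of_finrank_le ?_ ?_).symm
  · rintro _ ⟨c, rfl⟩
    exact algebraMap_mem_of_nonneg hconst hmono hD c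
  · rw [h1, LinearMap.finrank_range_of_inj (algebraMap k K).injective, finrank_self]

lemma finrank_ker_inf_comap_add_one (hconst : ∀ c : k, algebraMap k K c ∈ L 0)
    (hmono : ∀ D D' : pt →₀ ℤ, D ≤ D' → L D ≤ L D') {D D' : pt →₀ ℤ} (hD : 0 ≤ D)
    (hDD' : D ≤ D') (ev : L D' →ₗ[k] k)
    (hev : ∀ (f : L D') (c : k), (f : K) = algebraMap k K c → ev f = c)
    [FiniteDimensional k (L D')] :
    finrank k (LinearMap.ker ev ⊓ comap (L D').subtype (L D) : Submodule k (L D')) + 1 =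
      finrank k (L D) := by
  have h1 : algebraMap k K 1 ∈ L D' := algebraMap_mem_of_nonneg hconst hmono (hD.trans hDD') 1
  rw [finrank_ker_inf_add_one (w := ⟨_, h1⟩) (algebraMap_mem_of_nonneg hconst hmono hD 1)
    (by rw [hev _ 1 rfl]; exact one_ne_zero)]
  exact (comapSubtypeEquivOfLe (hmono _ _ hDD')).finrank_eq

lemma ker_inf_comap_inf_ker_inf_comap_eq_bot (dv : Kˣ → (pt →₀ ℤ))
    (hL : ∀ (D : pt →₀ ℤ) (f : K), f ∈ L D ↔ f = 0 ∨ ∃ u : Kˣ, (u : K) = f ∧ 0 ≤ dv u + D)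
    (hconst : ∀ c : k, algebraMap k K c ∈ L 0)
    (hmono : ∀ D D' : pt →₀ ℤ, D ≤ D' → L D ≤ L D') {D D₁ D₂ : pt →₀ ℤ}
    (h0 : 0 ≤ D₁ ⊓ D₂) (h1 : finrank k (L (D₁ ⊓ D₂)) = 1) (ev : L D →ₗ[k] k)
    (hev : ∀ (f : L D) (c : k), (f : K) = algebraMap k K c → ev f = c) :
    (LinearMap.ker ev ⊓ comap (L D).subtype (L D₁)) ⊓
      (LinearMap.ker ev ⊓ comap (L D).subtype (L D₂)) = ⊥ := by
  rw [eq_bot_iff]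
  rintro f ⟨⟨hf0, hf₁⟩, -, hf₂⟩
  obtain ⟨c, hc⟩ : (f : K) ∈ LinearMap.range (Algebra.linearMap k K) := by
    rw [← eq_range_algebraMap_of_finrank_eq_one hconst hmono h0 h1]
    exact inf_le_of_mem_iff_exists_unit dv hL D₁ D₂ ⟨hf₁, hf₂⟩
  obtain rfl : c = 0 := (hev f c hc.symm).symm.trans hf0
  rw [mem_bot]
  ext
  simpa using hc.symm

end RiemannRochSpace

theorem stmt6_general {k K pt : Type} [Field k] [Field K] [Algebra k K]
    (dv : Kˣ → (pt →₀ ℤ))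
    (L : (pt →₀ ℤ) → Submodule k K)
    (hL : ∀ (D : pt →₀ ℤ) (f : K),
      f ∈ L D ↔ f = 0 ∨ ∃ u : Kˣ, (u : K) = f ∧ 0 ≤ dv u + D)
    (hRR : ∀ D : pt →₀ ℤ, 0 ≤ D → D ≠ 0 →
      Module.finrank k (L D) = (D.sum fun _ n => n).toNat)
    (hconst : ∀ c : k, algebraMap k K c ∈ L 0)
    (hmono : ∀ D D' : pt →₀ ℤ, D ≤ D' → L D ≤ L D')
    (X Y : Finset pt) (Q : pt)
    (hXY : X ∩ Y = {Q})
    (ev : (L (setDiv (X ∪ Y))) →ₗ[k] k)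
    (hev : ∀ (f : L (setDiv (X ∪ Y))) (c : k),
      (f : K) = algebraMap k K c → ev f = c) :
    ((LinearMap.ker ev ⊓
        Submodule.comap (L (setDiv (X ∪ Y))).subtype (L (setDiv X))) ⊓
      (LinearMap.ker ev ⊓
        Submodule.comap (L (setDiv (X ∪ Y))).subtype (L (setDiv Y))) = ⊥) ∧
    ((LinearMap.ker ev ⊓
        Submodule.comap (L (setDiv (X ∪ Y))).subtype (L (setDiv X))) ⊔
      (LinearMap.ker ev ⊓
        Submodule.comap (L (setDiv (X ∪ Y))).subtype (L (setDiv Y)))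
      = LinearMap.ker ev) := by
  have hQ : Q ∈ X ∧ Q ∈ Y := Finset.mem_inter.mp (hXY ▸ Finset.mem_singleton_self Q)
  have hQXY : Q ∈ X ∪ Y := Finset.mem_union_left _ hQ.1
  have hfinrank (Z : Finset pt) (hZ : Z.Nonempty) : finrank k (L (setDiv Z)) = Z.card := by
    rw [hRR _ (setDiv_nonneg Z) (setDiv_ne_zero hZ), sum_setDiv, Int.toNat_natCast]
  have : FiniteDimensional k (L (setDiv (X ∪ Y))) := .of_finrank_pos <| by
    rw [hfinrank _ ⟨Q, hQXY⟩]; exact Finset.card_pos.mpr ⟨Q, hQXY⟩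
  have hfinrank₀ (Z : Finset pt) (hZ : Z ⊆ X ∪ Y) (hQZ : Q ∈ Z) :
      finrank k (LinearMap.ker ev ⊓ comap (L (setDiv (X ∪ Y))).subtype (L (setDiv Z)) :
        Submodule k (L (setDiv (X ∪ Y)))) + 1 = Z.card := by
    rw [finrank_ker_inf_comap_add_one hconst hmono (setDiv_nonneg Z) (setDiv_mono hZ) ev hev,
      hfinrank Z ⟨Q, hQZ⟩]
  have hbot := ker_inf_comap_inf_ker_inf_comap_eq_bot (D₁ := setDiv X) (D₂ := setDiv Y)
    dv hL hconst hmono (setDiv_inter X Y ▸ setDiv_nonneg _)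
    (by rw [← setDiv_inter, hXY, hfinrank _ (Finset.singleton_nonempty Q), Finset.card_singleton])
    ev hev
  refine ⟨hbot, sup_eq_of_inf_eq_bot_of_finrank_add_eq inf_le_left inf_le_left hbot ?_⟩
  have hker := hfinrank₀ (X ∪ Y) subset_rfl hQXY
  rw [comap_subtype_self, inf_top_eq] at hker
  have hcard := Finset.card_union_add_card_inter X Y
  rw [hXY, Finset.card_singleton] at hcard
  have hX := hfinrank₀ X Finset.subset_union_left hQ.1
  have hY := hfinrank₀ Y Finset.subset_union_right hQ.2
  omega

/-- Model of an elliptic curve `E` over a finite field `k` as in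
Statements 4–5.  Fix a point `P` and finite subsets `X, Y` of points, not containing
`P`, meeting in exactly one point `Q`.  Since `P ∉ X ∪ Y`, functions in
`L((X ∪ Y))` are regular at `P`; `ev` is the `k`-linear evaluation-at-`P` functional on
`L((X ∪ Y))` (it sends the constant `c` to `c`).  With
`L_0(D) = {f ∈ L(D) : f(P) = 0}`, we have the internal direct sum decomposition
`L_0((X ∪ Y)) = L_0((X)) ⊕ L_0((Y))`. -/
theorem stmt6 {k K pt : Type} [Field k] [Fintype k] [Field K] [Algebra k K]
    (dv : Kˣ → (pt →₀ ℤ))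
    (L : (pt →₀ ℤ) → Submodule k K)
    (hL : ∀ (D : pt →₀ ℤ) (f : K),
      f ∈ L D ↔ f = 0 ∨ ∃ u : Kˣ, (u : K) = f ∧ 0 ≤ dv u + D)
    (hRR : ∀ D : pt →₀ ℤ, 0 ≤ D → D ≠ 0 →
      Module.finrank k (L D) = (D.sum fun _ n => n).toNat)
    (hL0 : ∀ f ∈ L 0, ∃ c : k, algebraMap k K c = f)
    (hconst : ∀ c : k, algebraMap k K c ∈ L 0)
    (hmono : ∀ D D' : pt →₀ ℤ, D ≤ D' → L D ≤ L D')
    (P : pt) (X Y : Finset pt) (Q : pt)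
    (hPXY : P ∉ X ∪ Y) (hXY : X ∩ Y = {Q})
    (ev : (L (setDiv (X ∪ Y))) →ₗ[k] k)
    (hev : ∀ (f : L (setDiv (X ∪ Y))) (c : k),
      (f : K) = algebraMap k K c → ev f = c) :
    ((LinearMap.ker ev ⊓
        Submodule.comap (L (setDiv (X ∪ Y))).subtype (L (setDiv X))) ⊓
      (LinearMap.ker ev ⊓
        Submodule.comap (L (setDiv (X ∪ Y))).subtype (L (setDiv Y))) = ⊥) ∧
    ((LinearMap.ker ev ⊓
        Submodule.comap (L (setDiv (X ∪ Y))).subtype (L (setDiv X))) ⊔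
      (LinearMap.ker ev ⊓
        Submodule.comap (L (setDiv (X ∪ Y))).subtype (L (setDiv Y)))
      = LinearMap.ker ev) :=
  stmt6_general dv L hL hRR hconst hmono X Y Q hXY ev hev
end

section
/- Let E be an elliptic curve over a finite field k, {Y_i}_{i∈I} a finite family of finite subsets of E(k), Y = ∪_i Y_i, and m > |Y| a positive integer. Then there exists a finite extension k' of k and a subset Σ ⊆ E(k') with |Σ| = m, Σ ∩ Y = ∅, such that for every i, the evaluation code C_L((Y_i), Σ) is MDS; equivalently, for every i and every subset J ⊆ Σ with |J| = |Y_i|, the divisor (Y_i) − (J) is not principal. -/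
/-!
By Abel–Jacobi, `(Y i) - (J)` is principal exactly when `∑ J = ∑ Y i` in the group of points,
so it suffices to find `m` points, none in `Y`, no nonempty subset of which sums to a value in
the finite set `{∑ Y i}`. Such points are chosen one at a time: each new point `x` only has to
avoid the finitely many values `t - ∑ J'` with `t` forbidden and `J'` a subset of the points
already chosen, and the group of points is infinite.
-/

open scoped Classical

lemma sum_setDiv_sub_setDiv {A M : Type} [AddCommGroup M] (g : A → M) (Y J : Finset A) :
    (setDiv Y - setDiv J).sum (fun a n => n • g a) = ∑ y ∈ Y, g y - ∑ x ∈ J, g x := by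
  have hsetDiv (Z : Finset A) : (setDiv Z).sum (fun a n => n • g a) = ∑ z ∈ Z, g z := by
    rw [setDiv, ← Finsupp.sum_finsetSum_index (h := fun a n => n • g a) (fun _ => zero_smul ℤ _)
      (fun _ _ _ => add_smul _ _ _)]
    exact Finset.sum_congr rfl fun z _ => by
      rw [Finsupp.sum_single_index (zero_smul ℤ (g z)), one_smul]
  rw [Finsupp.sum_sub_index (fun _ _ _ => sub_smul _ _ _), hsetDiv, hsetDiv]

lemma not_exists_principal_setDiv_sub_setDiv {K A : Type} [Monoid K] [AddCommGroup A]
    {dv : Kˣ → (A →₀ ℤ)}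
    (hAJ : ∀ D : A →₀ ℤ, (D.sum fun _ n => n) = 0 →
      ((∃ u : Kˣ, dv u = D) ↔ (D.sum fun a n => n • a) = (0 : A)))
    {Y J : Finset A} (hcard : J.card = Y.card) (hsum : ∑ x ∈ J, x ≠ ∑ y ∈ Y, y) :
    ¬ ∃ u : Kˣ, dv u = setDiv Y - setDiv J := by
  have hdeg : ((setDiv Y - setDiv J).sum fun _ n => n) = 0 := by
    simpa [hcard] using sum_setDiv_sub_setDiv (fun _ => (1 : ℤ)) Y J
  rw [hAJ _ hdeg]
  exact fun h => hsum (sub_eq_zero.mp ((sum_setDiv_sub_setDiv (fun a => a) Y J).symm.trans h)).symm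

theorem Infinite.exists_finset_card_eq_forall_sum_notMem {A : Type} [AddCommGroup A] [Infinite A]
    (T : Finset A) (c : ℕ) :
    ∃ S : Finset A, S.card = c ∧ ∀ J ⊆ S, J.Nonempty → ∑ x ∈ J, x ∉ T := by
  induction c with
  | zero => exact ⟨∅, rfl, fun J hJ hne => absurd (Finset.subset_empty.mp hJ) hne.ne_empty⟩
  | succ c ih =>
    obtain ⟨S, hcard, hS⟩ := ih
    obtain ⟨x, hx⟩ := Infinite.exists_notMem_finset
      (S ∪ T.biUnion fun t => S.powerset.image fun J' => t - ∑ y ∈ J', y)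
    simp only [Finset.mem_union, Finset.mem_biUnion, Finset.mem_image, Finset.mem_powerset,
      not_or, not_exists, not_and] at hx
    obtain ⟨hxS, hxT⟩ := hx
    refine ⟨insert x S, by rw [Finset.card_insert_of_notMem hxS, hcard], fun J hJ hne hJT => ?_⟩
    by_cases hxJ : x ∈ J
    · rw [← Finset.add_sum_erase J _ hxJ] at hJT
      refine hxT _ hJT (J.erase x) ?_ (by abel)
      simpa [Finset.subset_insert_iff] using hJ
    · exact hS J ((Finset.subset_insert_iff_of_notMem hxJ).mp hJ) hne hJT

lemma exists_finset_subset_of_monotone_of_exhaustive {A : Type} {Ek : ℕ → Set A}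
    (hEkmono : ∀ n, Ek n ⊆ Ek (n + 1)) (hEkall : ∀ a : A, ∃ n, a ∈ Ek n) (S : Finset A) :
    ∃ n, (S : Set A) ⊆ Ek n :=
  (monotone_nat_of_le_succ hEkmono).directed_le.exists_mem_subset_of_finset_subset_biUnion
    fun a _ => Set.mem_iUnion.mpr (hEkall a)

theorem stmt19_general {K A : Type} [Field K] [AddCommGroup A] [Infinite A]
    (Ek : ℕ → Set A)
    (hEkmono : ∀ n, Ek n ⊆ Ek (n + 1)) (hEkall : ∀ a : A, ∃ n, a ∈ Ek n)
    (dv : Kˣ → (A →₀ ℤ))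
    (hAJ : ∀ D : A →₀ ℤ, (D.sum fun _ n => n) = 0 →
      ((∃ u : Kˣ, dv u = D) ↔ (D.sum fun a n => n • a) = (0 : A)))
    {ι : Type} [Fintype ι] (Y : ι → Finset A)
    (hYne : ∀ i, (Y i).Nonempty)
    (m : ℕ) :
    ∃ (n : ℕ) (Sg : Finset A),
      (Sg : Set A) ⊆ Ek n ∧
      Sg.card = m ∧
      Disjoint (Sg : Set A) (⋃ i, (Y i : Set A)) ∧
      ∀ i, ∀ J ⊆ Sg, J.card = (Y i).card →
        ¬ ∃ u : Kˣ, dv u = setDiv (Y i) - setDiv J := by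
  -- Forbidding the points of `Y` as sums of singletons keeps `Sg` off `Y`.
  obtain ⟨Sg, hcard, hSg⟩ := Infinite.exists_finset_card_eq_forall_sum_notMem
    (Finset.univ.biUnion Y ∪ Finset.univ.image fun i => ∑ y ∈ Y i, y) m
  obtain ⟨n, hn⟩ := exists_finset_subset_of_monotone_of_exhaustive hEkmono hEkall Sg
  refine ⟨n, Sg, hn, hcard, ?_, fun i J hJ hc => ?_⟩
  · refine Set.disjoint_left.mpr fun x hx hxY => hSg {x} (by simpa using hx) ⟨x, by simp⟩ ?_
    exact Finset.mem_union_left _ (by simpa using hxY)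
  · refine not_exists_principal_setDiv_sub_setDiv hAJ hc fun hsum => hSg J hJ ?_ ?_
    · exact Finset.card_pos.mp (hc ▸ (hYne i).card_pos)
    · exact Finset.mem_union_right _ (Finset.mem_image.mpr ⟨i, Finset.mem_univ i, hsum.symm⟩)

/-- Model of an elliptic curve `E` over a finite field `k`: `A = E(k̄)`
is the (infinite) group of points, `Ek n = E(k_n)` are the finite sets of points
rational over the finite extensions of `k`, exhausting `A`; `K` is the function field,
`dv` the principal-divisor map, and a degree-zero divisor is principal iff its sum under
the group law is `0` (Abel–Jacobi).  Let `{Y i}` be a finite family of finite subsets of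
`E(k) = Ek 0`, `Y = ∪ᵢ Y i`, and `m > |Y|`.  Then there is a finite extension `k'`
(i.e. some `Ek n`) and a subset `Σ ⊆ E(k')` with `|Σ| = m`, `Σ ∩ Y = ∅`, such that for
every `i` and every `J ⊆ Σ` with `|J| = |Y i|` the divisor `(Y i) - (J)` is not
principal — equivalently, every evaluation code `C_L((Y i), Σ)` is MDS. -/
theorem stmt19 {K A : Type} [Field K] [AddCommGroup A] [Infinite A]
    (Ek : ℕ → Set A) (hEkfin : ∀ n, (Ek n).Finite)
    (hEkmono : ∀ n, Ek n ⊆ Ek (n + 1)) (hEkall : ∀ a : A, ∃ n, a ∈ Ek n)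
    (dv : Kˣ → (A →₀ ℤ))
    (hAJ : ∀ D : A →₀ ℤ, (D.sum fun _ n => n) = 0 →
      ((∃ u : Kˣ, dv u = D) ↔ (D.sum fun a n => n • a) = (0 : A)))
    {ι : Type} [Fintype ι] (Y : ι → Finset A)
    (hYrat : ∀ i, (Y i : Set A) ⊆ Ek 0) (hYne : ∀ i, (Y i).Nonempty)
    (m : ℕ) (hm : (Finset.univ.biUnion Y).card < m) :
    ∃ (n : ℕ) (Sg : Finset A),
      (Sg : Set A) ⊆ Ek n ∧
      Sg.card = m ∧
      Disjoint (Sg : Set A) (⋃ i, (Y i : Set A)) ∧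
      ∀ i, ∀ J ⊆ Sg, J.card = (Y i).card →
        ¬ ∃ u : Kˣ, dv u = setDiv (Y i) - setDiv J :=
  stmt19_general Ek hEkmono hEkall dv hAJ Y hYne m
end
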